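/- Let H and K be complex Hilbert spaces, let ξ ∈ H and η ∈ K be unit vectors, and let e = ξ ⊠ η be the associated rank-one partial isometry from H to K. Let x : H → K be a bounded ℂ-linear operator with ‖x‖ = 1 and ‖e − x‖ = 2. Then x = −e + (Id_K − P_η) ∘ x ∘ (Id_H − P_ξ), where P_ξ and P_η are the orthogonal projections onto the complex lines spanned by ξ and η respectively. -/
import Mathlib

noncomputable section

open scoped InnerProductSpace ComplexConjugate

/-- The rank-one operator `ξ ⊠ η : H →L[ℂ] K`, `ζ ↦ ⟪ξ, ζ⟫ • η`. -/
def rankOne {H K : Type*} [NormedAddCommGroup H] [InnerProductSpace ℂ H]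
    [NormedAddCommGroup K] [InnerProductSpace ℂ K] (ξ : H) (η : K) : H →L[ℂ] K :=
  (ContinuousLinearMap.toSpanSingleton ℂ η).comp (innerSL ℂ ξ)

lemma rankOne_apply {H K : Type*} [NormedAddCommGroup H] [InnerProductSpace ℂ H]
    [NormedAddCommGroup K] [InnerProductSpace ℂ K] (ξ : H) (η : K) (u : H) :
    rankOne ξ η u = ⟪ξ, u⟫_ℂ • η := rfl

set_option maxHeartbeats 1000000 in
/-- If `e = ξ ⊠ η` is a rank-one partial isometry and a norm-one operator `x` satisfies
`‖e - x‖ = 2`, then `x = -e + (1 - P_η) x (1 - P_ξ)`. -/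
theorem eq_neg_add_of_dist_two
    {H K : Type*}
    [NormedAddCommGroup H] [InnerProductSpace ℂ H] [CompleteSpace H]
    [NormedAddCommGroup K] [InnerProductSpace ℂ K] [CompleteSpace K]
    (ξ : H) (η : K) (hξ : ‖ξ‖ = 1) (hη : ‖η‖ = 1)
    (x : H →L[ℂ] K) (hx : ‖x‖ = 1)
    (hdist : ‖rankOne ξ η - x‖ = 2) :
    x = -(rankOne ξ η) +
      (ContinuousLinearMap.id ℂ K - rankOne η η).comp
        (x.comp (ContinuousLinearMap.id ℂ H - rankOne ξ ξ)) := by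
  -- Step 1 : `x ξ = -η`.
  have hxξ : x ξ = -η := by
    have hnorm : ‖x ξ + η‖ ≤ 0 := by
      apply le_of_forall_pos_le_add
      intro ε hε
      set s : ℝ := min (ε / 5) (1 / 10) with hs
      have hs0 : 0 < s := lt_min (by linarith) (by norm_num)
      have hs1 : s ≤ 1 / 10 := min_le_right _ _
      have hsε : s ≤ ε / 5 := min_le_left _ _
      have hlt : 2 - s ^ 2 < ‖rankOne ξ η - x‖ := by
        rw [hdist]; nlinarith
      obtain ⟨u, hu1, hu2⟩ := (rankOne ξ η - x).exists_lt_apply_of_lt_opNorm hlt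
      set c : ℂ := ⟪ξ, u⟫_ℂ with hc
      have happ : (rankOne ξ η - x) u = c • η - x u := by
        simp [rankOne_apply, hc]
      rw [happ] at hu2
      have hcle : ‖c‖ ≤ 1 := by
        calc ‖c‖ ≤ ‖ξ‖ * ‖u‖ := norm_inner_le_norm _ _
        _ ≤ 1 := by rw [hξ]; simpa using hu1.le
      have hxu : ‖x u‖ ≤ 1 := by
        calc ‖x u‖ ≤ ‖x‖ * ‖u‖ := x.le_opNorm u
        _ ≤ 1 := by rw [hx]; simpa using hu1.le
      have hcη : ‖c • η‖ = ‖c‖ := by rw [norm_smul, hη, mul_one]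
      have hcge : 1 - s ^ 2 ≤ ‖c‖ := by
        have := norm_sub_le (c • η) (x u)
        rw [hcη] at this
        linarith
      -- parallelogram: ‖c•η + x u‖ is small
      have hpar := parallelogram_law_with_norm ℂ (c • η) (x u)
      have hsum : ‖c • η + x u‖ ≤ 2 * s := by
        have hD : (2 - s ^ 2) * (2 - s ^ 2) ≤ ‖c • η - x u‖ * ‖c • η - x u‖ :=
          mul_self_le_mul_self (by nlinarith) hu2.le
        have h1 : ‖c • η + x u‖ * ‖c • η + x u‖ ≤ 4 * s ^ 2 := by
          rw [hcη] at hpar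
          nlinarith [norm_nonneg (x u), norm_nonneg c]
        nlinarith [norm_nonneg (c • η + x u)]
      -- the orthogonal part `w` is small
      set w : H := u - c • ξ with hw
      have hwin : ⟪c • ξ, w⟫_ℂ = 0 := by
        have : ⟪ξ, w⟫_ℂ = 0 := by
          simp [hw, inner_sub_right, inner_smul_right, ← hc,
            inner_self_eq_norm_sq_to_K, hξ]
        rw [inner_smul_left, this, mul_zero]
      have hdecomp : u = c • ξ + w := by simp [hw]
      have hpyth : ‖u‖ * ‖u‖ = ‖c • ξ‖ * ‖c • ξ‖ + ‖w‖ * ‖w‖ := by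
        conv_lhs => rw [hdecomp]
        exact norm_add_sq_eq_norm_sq_add_norm_sq_of_inner_eq_zero _ _ hwin
      have hcξ : ‖c • ξ‖ = ‖c‖ := by rw [norm_smul, hξ, mul_one]
      have hwle : ‖w‖ ≤ 2 * s := by
        have hu1' : ‖u‖ ≤ 1 := hu1.le
        have h2 : ‖w‖ * ‖w‖ ≤ 2 * s ^ 2 := by
          rw [hcξ] at hpyth
          have ha : ‖u‖ * ‖u‖ ≤ 1 := by
            nlinarith [mul_self_le_mul_self (norm_nonneg u) hu1']
          have hb : (1 - s ^ 2) * (1 - s ^ 2) ≤ ‖c‖ * ‖c‖ :=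
            mul_self_le_mul_self (by nlinarith) hcge
          nlinarith [sq_nonneg (s ^ 2)]
        nlinarith [norm_nonneg w, mul_self_nonneg (‖w‖ - 2 * s)]
      have hxw : ‖x w‖ ≤ 2 * s := by
        calc ‖x w‖ ≤ ‖x‖ * ‖w‖ := x.le_opNorm w
        _ ≤ 2 * s := by rw [hx, one_mul]; exact hwle
      -- combine
      have hkey : ‖c‖ * ‖x ξ + η‖ ≤ 4 * s := by
        have heq : c • (x ξ + η) = (c • η + x u) - x w := by
          have : x u = c • x ξ + x w := by
            rw [hdecomp]; simp
          rw [this]; module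
        calc ‖c‖ * ‖x ξ + η‖ = ‖c • (x ξ + η)‖ := by rw [norm_smul]
        _ = ‖(c • η + x u) - x w‖ := by rw [heq]
        _ ≤ ‖c • η + x u‖ + ‖x w‖ := norm_sub_le _ _
        _ ≤ 2 * s + 2 * s := add_le_add hsum hxw
        _ = 4 * s := by ring
      have hN : (0:ℝ) ≤ ‖x ξ + η‖ := norm_nonneg _
      nlinarith [mul_le_mul_of_nonneg_right hcge hN,
        mul_le_mul_of_nonneg_right (show s ^ 2 ≤ 1 / 100 by nlinarith) hN]
    have : x ξ + η = 0 := by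
      rw [← norm_le_zero_iff]; exact hnorm
    linear_combination (norm := module) this
  -- Step 2 : adjoint
  have hadj : ContinuousLinearMap.adjoint x η = -ξ := by
    set v : H := ContinuousLinearMap.adjoint x η with hv
    have hv1 : ‖v‖ ≤ 1 := by
      calc ‖v‖ ≤ ‖ContinuousLinearMap.adjoint x‖ * ‖η‖ :=
        (ContinuousLinearMap.adjoint x).le_opNorm η
      _ ≤ 1 := by
        rw [hη, mul_one, ContinuousLinearMap.adjoint.norm_map, hx]
    have hv2 : ⟪v, ξ⟫_ℂ = -1 := by
      rw [hv, ContinuousLinearMap.adjoint_inner_left, hxξ, inner_neg_right,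
        inner_self_eq_norm_sq_to_K, hη]
      norm_num
    have hre : RCLike.re (⟪v, ξ⟫_ℂ) = -1 := by rw [hv2]; simp
    have hsq : ‖v + ξ‖ ^ 2 ≤ 0 := by
      rw [norm_add_sq (𝕜 := ℂ), hre, hξ]
      nlinarith [norm_nonneg v, mul_self_le_mul_self (norm_nonneg v) hv1]
    have : v + ξ = 0 := by
      have := sq_nonneg ‖v + ξ‖
      have h0 : ‖v + ξ‖ ^ 2 = 0 := le_antisymm hsq this
      have : ‖v + ξ‖ = 0 := by nlinarith [norm_nonneg (v + ξ)]
      exact norm_eq_zero.mp this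
    linear_combination (norm := module) this
  have horth : ∀ w : H, ⟪ξ, w⟫_ℂ = 0 → ⟪η, x w⟫_ℂ = 0 := by
    intro w hw
    rw [← ContinuousLinearMap.adjoint_inner_left, hadj, inner_neg_left, hw, neg_zero]
  -- Step 3 : pointwise identity
  ext u
  set c : ℂ := ⟪ξ, u⟫_ℂ with hc
  set w : H := u - c • ξ with hw
  have hwperp : ⟪ξ, w⟫_ℂ = 0 := by
    simp [hw, inner_sub_right, inner_smul_right, ← hc,
      inner_self_eq_norm_sq_to_K, hξ]
  have h1 : (ContinuousLinearMap.id ℂ H - rankOne ξ ξ) u = w := by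
    simp [rankOne_apply, hw, ← hc]
  have h2 : ⟪η, x w⟫_ℂ = 0 := horth w hwperp
  have hLHS : x u = -(c • η) + x w := by
    have : u = c • ξ + w := by simp [hw]
    rw [this]; simp [hxξ]
  simp only [ContinuousLinearMap.add_apply, ContinuousLinearMap.neg_apply,
    ContinuousLinearMap.comp_apply, h1, ContinuousLinearMap.sub_apply,
    ContinuousLinearMap.id_apply, rankOne_apply, h2, zero_smul, sub_zero, ← hc]
  rw [hLHS]
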